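/- Let R_e : ℝ → M₃(ℝ) be a differentiable curve with R_e(t) ∈ SO(3) and tr(R_e(t)) ≠ −1 for all t, and write R_e′(t) = R_e(t)·Ω_e(t), where Ω_e(t) := R_e(t)ᵀ R_e′(t) is skew-symmetric. Then the squared geodesic distance to the identity, t ↦ ‖Log(R_e(t))‖_F², is differentiable and its derivative equals 2·tr( Log(R_e(t))ᵀ · Ω_e(t) ). -/

import Mathlib

open Matrix Real

/-- `SO3 R` means `R` is a rotation matrix: `Rᵀ R = I` and `det R = 1`. -/
def SO3 (R : Matrix (Fin 3) (Fin 3) ℝ) : Prop := Rᵀ * R = 1 ∧ R.det = 1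

/-- The rotation angle `θ(R) = arccos((tr R − 1)/2)` of a rotation matrix. -/
noncomputable def rotAngle (R : Matrix (Fin 3) (Fin 3) ℝ) : ℝ :=
  Real.arccos ((R.trace - 1) / 2)

/-- The principal logarithm on SO(3). -/
noncomputable def SO3Log (R : Matrix (Fin 3) (Fin 3) ℝ) : Matrix (Fin 3) (Fin 3) ℝ :=
  if R = 1 then 0 else (rotAngle R / (2 * Real.sin (rotAngle R))) • (R - Rᵀ)

/-- The squared Frobenius norm `‖A‖_F² = tr(Aᵀ A)`. -/
noncomputable def fnormSq (A : Matrix (Fin 3) (Fin 3) ℝ) : ℝ := (Aᵀ * A).trace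

open Filter Topology

/-!
For a rotation `R` with `tr R ≠ -1` one has `‖R - Rᵀ‖² = 2 (3 - tr R)(1 + tr R) = 8 sin² θ`, so
`‖Log R‖² = 2 θ² = 2 arccos² ((tr R - 1) / 2)` depends on the trace alone. Away from `R = 1` the
chain rule gives the formula, using `tr R' = tr (R Ω)` and `tr (Rᵀ Ω) = -tr (R Ω)` for skew `Ω`.
At `R = 1` the trace is maximal, so its derivative vanishes, and the bound
`arccos² x ≤ π² (1 - x) / 2` squeezes the difference quotient of `‖Log R‖²` to `0`.
-/
lemma trace_transpose_mul_self_nonneg {m n : Type*} [Fintype m] [Fintype n]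
    (A : Matrix m n ℝ) : 0 ≤ (Aᵀ * A).trace := by
  simpa [conjTranspose_eq_transpose_of_trivial] using
    (posSemidef_conjTranspose_mul_self A).trace_nonneg

lemma trace_le_card_of_transpose_mul_self_eq_one {n : Type*} [Fintype n] [DecidableEq n]
    {R : Matrix n n ℝ} (h : Rᵀ * R = 1) : R.trace ≤ Fintype.card n := by
  have hdist : ((1 - R)ᵀ * (1 - R)).trace = 2 * (Fintype.card n - R.trace) := by
    rw [transpose_sub, transpose_one, sub_mul, mul_sub, mul_sub, h]
    simp only [one_mul, mul_one, trace_sub, trace_one, trace_transpose]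
    ring
  linarith [trace_transpose_mul_self_nonneg (1 - R)]

lemma fnormSq_smul (c : ℝ) (A : Matrix (Fin 3) (Fin 3) ℝ) :
    fnormSq (c • A) = c ^ 2 * fnormSq A := by
  simp only [fnormSq, transpose_smul, smul_mul, Matrix.mul_smul, trace_smul, smul_eq_mul]
  ring

lemma SO3.adjugate_eq_transpose {R : Matrix (Fin 3) (Fin 3) ℝ} (h : SO3 R) :
    adjugate R = Rᵀ := by
  calc adjugate R = Rᵀ * R * adjugate R := by rw [h.1, one_mul]
    _ = Rᵀ := by rw [Matrix.mul_assoc, mul_adjugate, h.2, one_smul, mul_one]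

lemma SO3.trace_mul_self {R : Matrix (Fin 3) (Fin 3) ℝ} (h : SO3 R) :
    (R * R).trace = R.trace ^ 2 - 2 * R.trace := by
  have htrace_adj : (adjugate R).trace = (R.trace ^ 2 - (R * R).trace) / 2 := by
    rw [adjugate_fin_three]
    simp [trace_fin_three, mul_apply, Fin.sum_univ_three]
    ring
  rw [h.adjugate_eq_transpose, trace_transpose] at htrace_adj
  linarith

lemma SO3.fnormSq_sub_transpose {R : Matrix (Fin 3) (Fin 3) ℝ} (h : SO3 R) :
    fnormSq (R - Rᵀ) = 2 * ((3 - R.trace) * (1 + R.trace)) := by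
  have hRRt : R * Rᵀ = 1 := mul_eq_one_comm.mp h.1
  have hRtRt : (Rᵀ * Rᵀ).trace = (R * R).trace := by
    rw [← transpose_mul, trace_transpose]
  rw [fnormSq, transpose_sub, transpose_transpose, sub_mul, mul_sub, mul_sub,
    trace_sub, trace_sub, trace_sub, h.1, hRRt, hRtRt, h.trace_mul_self, trace_one,
    Fintype.card_fin]
  ring

lemma SO3.trace_le_three {R : Matrix (Fin 3) (Fin 3) ℝ} (h : SO3 R) : R.trace ≤ 3 := by
  simpa using trace_le_card_of_transpose_mul_self_eq_one h.1

lemma SO3.neg_one_lt_trace {R : Matrix (Fin 3) (Fin 3) ℝ} (h : SO3 R) (hne : R.trace ≠ -1) :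
    -1 < R.trace := by
  have hprod : 0 ≤ (3 - R.trace) * (1 + R.trace) := by
    have := trace_transpose_mul_self_nonneg (R - Rᵀ)
    rw [← fnormSq, h.fnormSq_sub_transpose] at this
    linarith
  rcases h.trace_le_three.lt_or_eq with hlt | heq
  · have : 0 ≤ 1 + R.trace := nonneg_of_mul_nonneg_right hprod (by linarith)
    exact lt_of_le_of_ne (by linarith) hne.symm
  · linarith

-- The junk value `0 / 0 = 0` at `R = 1`, where `rotAngle R = 0`, makes the case split superfluous.
lemma SO3Log_eq_smul (R : Matrix (Fin 3) (Fin 3) ℝ) :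
    SO3Log R = (rotAngle R / (2 * sin (rotAngle R))) • (R - Rᵀ) := by
  unfold SO3Log
  split_ifs with h
  · simp [h, rotAngle]
  · rfl

lemma SO3.fnormSq_SO3Log {R : Matrix (Fin 3) (Fin 3) ℝ} (h : SO3 R) (hne : R.trace ≠ -1) :
    fnormSq (SO3Log R) = 2 * rotAngle R ^ 2 := by
  have hgt := h.neg_one_lt_trace hne
  rw [SO3Log_eq_smul, fnormSq_smul, h.fnormSq_sub_transpose]
  rcases h.trace_le_three.lt_or_eq with hlt | heq
  · have hsin_sq : sin (rotAngle R) ^ 2 = (3 - R.trace) * (1 + R.trace) / 4 := by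
      rw [rotAngle, sin_arccos, sq_sqrt (by nlinarith)]
      ring
    have hpos : 0 < 1 + R.trace := by linarith
    have hpos' : 0 < 3 - R.trace := by linarith
    rw [div_pow, mul_pow, hsin_sq]
    field_simp
    ring
  · norm_num [rotAngle, heq]

lemma trace_transpose_sub_mul_of_transpose_eq_neg {n R : Type*} [Fintype n] [CommRing R]
    {A Ω : Matrix n n R} (hΩ : Ωᵀ = -Ω) : ((A - Aᵀ)ᵀ * Ω).trace = -2 * (A * Ω).trace := by
  have htranspose : (Aᵀ * Ω).trace = -(A * Ω).trace := by
    rw [← trace_transpose, transpose_mul, transpose_transpose, hΩ, neg_mul, trace_neg,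
      trace_mul_comm]
  rw [transpose_sub, transpose_transpose, sub_mul, trace_sub, htranspose]
  ring

section MatrixCurves

variable {t : ℝ}

lemma hasDerivAt_trace {n : Type*} [Fintype n] {A : ℝ → Matrix n n ℝ} {A' : Matrix n n ℝ}
    (h : ∀ i, HasDerivAt (fun s => A s i i) (A' i i) t) :
    HasDerivAt (fun s => (A s).trace) A'.trace t := by
  simpa [trace, diag] using HasDerivAt.fun_sum fun i (_ : i ∈ Finset.univ) => h i

lemma hasDerivAt_mul_apply {l m n : Type*} [Fintype m] {A : ℝ → Matrix l m ℝ}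
    {B : ℝ → Matrix m n ℝ} {A' : Matrix l m ℝ} {B' : Matrix m n ℝ}
    (hA : ∀ i j, HasDerivAt (fun s => A s i j) (A' i j) t)
    (hB : ∀ i j, HasDerivAt (fun s => B s i j) (B' i j) t) (i : l) (k : n) :
    HasDerivAt (fun s => (A s * B s) i k) ((A' * B t + A t * B') i k) t := by
  simp only [mul_apply, Matrix.add_apply, ← Finset.sum_add_distrib]
  exact HasDerivAt.fun_sum fun j _ => (hA i j).fun_mul (hB j k)

lemma transpose_mul_add_transpose_mul_eq_zero {n : Type*} [Fintype n] [DecidableEq n]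
    {R : ℝ → Matrix n n ℝ} {R' : Matrix n n ℝ} (horth : ∀ s, (R s)ᵀ * R s = 1)
    (h : ∀ i j, HasDerivAt (fun s => R s i j) (R' i j) t) :
    R'ᵀ * R t + (R t)ᵀ * R' = 0 := by
  refine Matrix.ext fun i k => ?_
  have hconst :=
    hasDerivAt_mul_apply (A := fun s => (R s)ᵀ) (A' := R'ᵀ) (fun i j => h j i) h i k
  simp only [horth] at hconst
  exact ((hasDerivAt_const t _).unique hconst).symm

end MatrixCurves

lemma hasDerivAt_zero_of_norm_le {E : Type*} [NormedAddCommGroup E] [NormedSpace ℝ E]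
    {f : ℝ → E} {g : ℝ → ℝ} {t : ℝ} (hg : HasDerivAt g 0 t) (hgt : g t = 0)
    (hle : ∀ᶠ s in 𝓝 t, ‖f s‖ ≤ g s) : HasDerivAt f 0 t := by
  have hft : f t = 0 := norm_le_zero_iff.mp (hgt ▸ hle.self_of_nhds)
  rw [hasDerivAt_iff_isLittleO] at hg ⊢
  simp only [hft, hgt, smul_zero, sub_zero] at hg ⊢
  have hfg : f =O[𝓝 t] g := .of_bound' (hle.mono fun s hs => hs.trans (le_abs_self _))
  exact hfg.trans_isLittleO hg

lemma arccos_sq_le {x : ℝ} (hx : x ≤ 1) : arccos x ^ 2 ≤ π ^ 2 / 2 * (1 - x) := by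
  have hcos : x ≤ cos (arccos x) := by
    rcases le_or_gt (-1) x with h | h
    · rw [cos_arccos h hx]
    · rw [arccos_of_le_neg_one h.le, cos_pi]
      exact h.le
  have hθ : |arccos x| ≤ π := by
    rw [abs_of_nonneg (arccos_nonneg x)]
    exact arccos_le_pi x
  have hbound : 2 / π ^ 2 * arccos x ^ 2 ≤ 1 - x := by
    linarith [cos_le_one_sub_mul_cos_sq hθ]
  calc arccos x ^ 2 = π ^ 2 / 2 * (2 / π ^ 2 * arccos x ^ 2) := by field_simp
    _ ≤ π ^ 2 / 2 * (1 - x) := by gcongr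

lemma HasDerivAt.arccos_sq {u : ℝ → ℝ} {u' t : ℝ} (hu : HasDerivAt u u' t)
    (hle : ∀ᶠ s in 𝓝 t, u s ≤ 1) (hgt : -1 < u t) :
    HasDerivAt (fun s => Real.arccos (u s) ^ 2)
      (-2 * Real.arccos (u t) / Real.sin (Real.arccos (u t)) * u') t := by
  rcases hle.self_of_nhds.lt_or_eq with hlt | heq
  · refine (((hasDerivAt_arccos hgt.ne' hlt.ne).pow 2).comp t hu).congr_deriv ?_
    rw [sin_arccos]
    ring
  · have hu' : u' = 0 := IsLocalMax.hasDerivAt_eq_zero (hle.mono fun s hs => heq ▸ hs) hu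
    rw [heq, arccos_one, hu', mul_zero]
    refine hasDerivAt_zero_of_norm_le (g := fun s => π ^ 2 / 2 * (1 - u s)) ?_ ?_ ?_
    · simpa [hu'] using (hu.const_sub 1).const_mul (π ^ 2 / 2)
    · simp [heq]
    · filter_upwards [hle] with s hs
      rw [norm_pow, Real.norm_eq_abs, sq_abs]
      exact arccos_sq_le hs

/-- Along a differentiable curve `R_e` in SO(3) with `tr(R_e(t)) ≠ −1` and
`R_e′ = R_e Ω_e`, the squared geodesic distance to the identity
`t ↦ ‖Log(R_e(t))‖_F²` is differentiable with derivative
`2 tr(Log(R_e(t))ᵀ Ω_e(t))`. -/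
theorem stmt3 (Re Re' : ℝ → Matrix (Fin 3) (Fin 3) ℝ)
    (hSO3 : ∀ t, SO3 (Re t)) (htr : ∀ t, (Re t).trace ≠ -1)
    (hderiv : ∀ t, ∀ i j, HasDerivAt (fun s => Re s i j) (Re' t i j) t)
    (Ωe : ℝ → Matrix (Fin 3) (Fin 3) ℝ) (hΩe : ∀ t, Ωe t = (Re t)ᵀ * Re' t) :
    ∀ t, HasDerivAt (fun s => fnormSq (SO3Log (Re s)))
      (2 * ((SO3Log (Re t))ᵀ * Ωe t).trace) t := by
  intro t
  have hu : HasDerivAt (fun s => ((Re s).trace - 1) / 2) ((Re' t).trace / 2) t :=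
    ((hasDerivAt_trace fun i => hderiv t i i).sub_const 1).div_const 2
  have hskew : (Ωe t)ᵀ = -Ωe t := by
    rw [hΩe, transpose_mul, transpose_transpose, eq_neg_iff_add_eq_zero]
    exact transpose_mul_add_transpose_mul_eq_zero (fun s => (hSO3 s).1) (hderiv t)
  have hReΩe : Re t * Ωe t = Re' t := by
    rw [hΩe, ← Matrix.mul_assoc, mul_eq_one_comm.mp (hSO3 t).1, Matrix.one_mul]
  have htrace : ((SO3Log (Re t))ᵀ * Ωe t).trace
      = -(rotAngle (Re t) / sin (rotAngle (Re t))) * (Re' t).trace := by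
    rw [SO3Log_eq_smul, transpose_smul, smul_mul, trace_smul,
      trace_transpose_sub_mul_of_transpose_eq_neg hskew, hReΩe, smul_eq_mul]
    ring
  simp_rw [fun s => (hSO3 s).fnormSq_SO3Log (htr s)]
  rw [htrace]
  refine ((hu.arccos_sq (.of_forall fun s => ?_) ?_).const_mul 2).congr_deriv ?_
  · linarith [(hSO3 s).trace_le_three]
  · linarith [(hSO3 t).neg_one_lt_trace (htr t)]
  · simp only [rotAngle]
    ring
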